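/- With notation as in the previous statement (full eight-block splitting of B and D, BD^T = 0, ker B = im D^T, ker D = im B^T, R, G positive definite, E_c, 𝓡_l nonsingular), the dimension of the kernel of A = [[B_c E_c, 0, B_r R, 0, B_g, B_j], [0, D_l 𝓡_l, D_r, D_u, D_g G, 0]] equals dim ker (B_c B_j) + dim ker (D_u D_l). -/

import Mathlib

/-!
For `x = (a, b, r, u, g, j) ∈ ker A`, the vectors `(0, E_c a, R r, 0, 0, 0, g, j) ∈ ker B = im Dᵀ`
and `(0, 0, r, u, 0, 𝓡_l b, G g, 0) ∈ ker D` are orthogonal, so `r ⬝ᵥ R r + g ⬝ᵥ G g = 0` and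
positivity forces `r = g = 0`. What is left of `A x = 0` says exactly that
`(E_c a, j) ∈ ker (B_c B_j)` and `(u, 𝓡_l b) ∈ ker (D_u D_l)`; as `E_c` and `𝓡_l` are invertible,
these coordinates identify `ker A` with the product of the two kernels.
-/

open Matrix

namespace Matrix

variable {𝕜 : Type*} [CommRing 𝕜] {m n k : Type*} [Fintype n] [Fintype k]

theorem dotProduct_eq_zero_of_ker_le_range_transpose {B : Matrix m n 𝕜} {D : Matrix k n 𝕜}
    (hBD : LinearMap.ker B.mulVecLin ≤ LinearMap.range Dᵀ.mulVecLin) {v w : n → 𝕜}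
    (hv : B *ᵥ v = 0) (hw : D *ᵥ w = 0) : v ⬝ᵥ w = 0 := by
  obtain ⟨z, rfl⟩ := hBD hv
  rw [mulVecLin_apply, mulVec_transpose, ← dotProduct_mulVec, hw, dotProduct_zero]

theorem eq_zero_of_dotProduct_mulVec_self_eq_zero [PartialOrder 𝕜] {R : Matrix n n 𝕜}
    (hR : ∀ u : n → 𝕜, u ≠ 0 → 0 < u ⬝ᵥ R *ᵥ u) {u : n → 𝕜} (h : u ⬝ᵥ R *ᵥ u = 0) : u = 0 :=
  by_contra fun hu ↦ (hR u hu).ne' h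

theorem dotProduct_mulVec_self_nonneg [PartialOrder 𝕜] {R : Matrix n n 𝕜}
    (hR : ∀ u : n → 𝕜, u ≠ 0 → 0 < u ⬝ᵥ R *ᵥ u) (u : n → 𝕜) : 0 ≤ u ⬝ᵥ R *ᵥ u := by
  rcases eq_or_ne u 0 with rfl | hu
  · simp
  · exact (hR u hu).le

end Matrix

theorem Sum.forall_elim {α β γ : Type*} {p : (α ⊕ β → γ) → Prop} :
    (∀ x, p x) ↔ ∀ a b, p (Sum.elim a b) :=
  ⟨fun h _ _ ↦ h _, fun h x ↦ Sum.elim_comp_inl_inr x ▸ h _ _⟩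

section KerCoords

variable {ιc ιl ιr ιu ιg ιj : Type*} [Fintype ιc] [Fintype ιl] (Ec : Matrix ιc ιc ℝ)
  (Rl : Matrix ιl ιl ℝ)

/-- The coordinates `(E_c a, j)` and `(u, 𝓡_l b)` of `x = (a, b, r, u, g, j)`. -/
def kerCoords : (ιc ⊕ ιl ⊕ ιr ⊕ ιu ⊕ ιg ⊕ ιj → ℝ) →ₗ[ℝ] (ιc ⊕ ιj → ℝ) × (ιu ⊕ ιl → ℝ) where
  toFun x := (Sum.elim (Ec *ᵥ fun i ↦ x (.inl i)) (fun i ↦ x (.inr (.inr (.inr (.inr (.inr i)))))),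
    Sum.elim (fun i ↦ x (.inr (.inr (.inr (.inl i))))) (Rl *ᵥ fun i ↦ x (.inr (.inl i))))
  map_add' x y := by
    ext (i | i)
    exacts [congrFun (mulVec_add Ec _ _) i, rfl, rfl, congrFun (mulVec_add Rl _ _) i]
  map_smul' c x := by
    ext (i | i)
    exacts [congrFun (mulVec_smul Ec c _) i, rfl, rfl, congrFun (mulVec_smul Rl c _) i]

@[simp]
theorem kerCoords_sumElim (a : ιc → ℝ) (b : ιl → ℝ) (r : ιr → ℝ) (u : ιu → ℝ) (g : ιg → ℝ)
    (j : ιj → ℝ) :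
    kerCoords Ec Rl (Sum.elim a (Sum.elim b (Sum.elim r (Sum.elim u (Sum.elim g j))))) =
      (Sum.elim (Ec *ᵥ a) j, Sum.elim u (Rl *ᵥ b)) :=
  rfl

end KerCoords

section Circuit

variable {ιm ιc ιr ιu ιw ιl ιg ιj κ τ : Type*} [Fintype ιm] [Fintype ιc] [Fintype ιr]
  [Fintype ιu] [Fintype ιw] [Fintype ιl] [Fintype ιg] [Fintype ιj] [Fintype τ]
  {Bm : Matrix κ ιm ℝ} {Bc : Matrix κ ιc ℝ} {Br : Matrix κ ιr ℝ} {Bu : Matrix κ ιu ℝ}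
  {Bw : Matrix κ ιw ℝ} {Bl : Matrix κ ιl ℝ} {Bg : Matrix κ ιg ℝ} {Bj : Matrix κ ιj ℝ}
  {Dm : Matrix τ ιm ℝ} {Dc : Matrix τ ιc ℝ} {Dr : Matrix τ ιr ℝ} {Du : Matrix τ ιu ℝ}
  {Dw : Matrix τ ιw ℝ} {Dl : Matrix τ ιl ℝ} {Dg : Matrix τ ιg ℝ} {Dj : Matrix τ ιj ℝ}
  {R : Matrix ιr ιr ℝ} {G : Matrix ιg ιg ℝ} {Ec : Matrix ιc ιc ℝ} {Rl : Matrix ιl ιl ℝ}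

variable (Bc Br Bg Bj Dr Du Dl Dg R G Ec Rl) in
/-- The matrix `A` of (20), with columns in the order `c, l, r, u, g, j`. -/
def matrixA : Matrix (κ ⊕ τ) (ιc ⊕ ιl ⊕ ιr ⊕ ιu ⊕ ιg ⊕ ιj) ℝ :=
  fromRows (fromCols (Bc * Ec) (fromCols 0 (fromCols (Br * R) (fromCols 0 (fromCols Bg Bj)))))
    (fromCols 0 (fromCols (Dl * Rl) (fromCols Dr (fromCols Du (fromCols (Dg * G) 0)))))

variable (hBD : LinearMap.ker (fromCols Bm (fromCols Bc (fromCols Br (fromCols Bu (fromCols Bw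
      (fromCols Bl (fromCols Bg Bj))))))).mulVecLin ≤ LinearMap.range (fromCols Dm (fromCols Dc
        (fromCols Dr (fromCols Du (fromCols Dw (fromCols Dl (fromCols Dg Dj)))))))ᵀ.mulVecLin)
    (hR : ∀ u : ιr → ℝ, u ≠ 0 → 0 < u ⬝ᵥ R *ᵥ u) (hG : ∀ u : ιg → ℝ, u ≠ 0 → 0 < u ⬝ᵥ G *ᵥ u)
include hBD hR hG

theorem resistive_components_eq_zero
    {c : ιc → ℝ} {l : ιl → ℝ} {r : ιr → ℝ} {u : ιu → ℝ} {g : ιg → ℝ} {j : ιj → ℝ}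
    (hB : Bc *ᵥ c + Br *ᵥ R *ᵥ r + Bg *ᵥ g + Bj *ᵥ j = 0)
    (hD : Dl *ᵥ l + Dr *ᵥ r + Du *ᵥ u + Dg *ᵥ G *ᵥ g = 0) :
    r = 0 ∧ g = 0 := by
  have horth := dotProduct_eq_zero_of_ker_le_range_transpose hBD
    (v := Sum.elim 0 (Sum.elim c (Sum.elim (R *ᵥ r) (Sum.elim 0 (Sum.elim 0 (Sum.elim 0
      (Sum.elim g j)))))))
    (w := Sum.elim 0 (Sum.elim 0 (Sum.elim r (Sum.elim u (Sum.elim 0 (Sum.elim l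
      (Sum.elim (G *ᵥ g) 0)))))))
    (by simpa [add_assoc] using hB)
    (by rw [← hD]; simp only [fromCols_mulVec_sumElim, mulVec_zero, zero_add, add_zero]; abel)
  simp only [sumElim_dotProduct_sumElim, dotProduct_zero, zero_dotProduct, zero_add,
    add_zero, dotProduct_comm (R *ᵥ r)] at horth
  obtain ⟨hr, hg⟩ := (add_eq_zero_iff_of_nonneg (dotProduct_mulVec_self_nonneg hR r)
    (dotProduct_mulVec_self_nonneg hG g)).1 horth
  exact ⟨eq_zero_of_dotProduct_mulVec_self_eq_zero hR hr,
    eq_zero_of_dotProduct_mulVec_self_eq_zero hG hg⟩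

theorem sumElim_mem_ker_matrixA_iff
    {a : ιc → ℝ} {b : ιl → ℝ} {r : ιr → ℝ} {u : ιu → ℝ} {g : ιg → ℝ} {j : ιj → ℝ} :
    Sum.elim a (Sum.elim b (Sum.elim r (Sum.elim u (Sum.elim g j)))) ∈
        LinearMap.ker (matrixA Bc Br Bg Bj Dr Du Dl Dg R G Ec Rl).mulVecLin ↔
      r = 0 ∧ g = 0 ∧ Sum.elim (Ec *ᵥ a) j ∈ LinearMap.ker (fromCols Bc Bj).mulVecLin ∧
        Sum.elim u (Rl *ᵥ b) ∈ LinearMap.ker (fromCols Du Dl).mulVecLin := by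
  simp only [matrixA, LinearMap.mem_ker, mulVecLin_apply, fromRows_mulVec,
    fromCols_mulVec_sumElim, ← Sum.elim_zero_zero, Sum.elim_eq_iff, zero_mulVec, ← mulVec_mulVec,
    zero_add, add_zero, ← add_assoc]
  constructor
  · rintro ⟨hB, hD⟩
    obtain ⟨rfl, rfl⟩ := resistive_components_eq_zero hBD hR hG hB hD
    simp only [mulVec_zero, add_zero] at hB hD
    exact ⟨rfl, rfl, hB, by rwa [add_comm]⟩
  · rintro ⟨rfl, rfl, hB, hD⟩
    simp only [mulVec_zero, add_zero]
    exact ⟨hB, by rwa [add_comm]⟩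

theorem kerCoords_mem_prod :
    ∀ x ∈ LinearMap.ker (matrixA Bc Br Bg Bj Dr Du Dl Dg R G Ec Rl).mulVecLin,
      kerCoords Ec Rl x ∈ (LinearMap.ker (fromCols Bc Bj).mulVecLin).prod
        (LinearMap.ker (fromCols Du Dl).mulVecLin) := by
  simp only [Sum.forall_elim, sumElim_mem_ker_matrixA_iff hBD hR hG, kerCoords_sumElim]
  exact fun _ _ _ _ _ _ hx ↦ hx.2.2

theorem eq_zero_of_kerCoords_eq_zero [DecidableEq ιc] [DecidableEq ιl] (hEc : Ec.det ≠ 0)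
    (hRl : Rl.det ≠ 0) :
    ∀ x ∈ LinearMap.ker (matrixA Bc Br Bg Bj Dr Du Dl Dg R G Ec Rl).mulVecLin,
      kerCoords Ec Rl x = 0 → x = 0 := by
  simp only [Sum.forall_elim, sumElim_mem_ker_matrixA_iff hBD hR hG, kerCoords_sumElim]
  rintro a b r u g j ⟨rfl, rfl, -⟩ h
  simp only [Prod.mk_eq_zero, ← Sum.elim_zero_zero, Sum.elim_eq_iff] at h ⊢
  obtain ⟨⟨ha, rfl⟩, rfl, hb⟩ := h
  simp [eq_zero_of_mulVec_eq_zero hEc ha, eq_zero_of_mulVec_eq_zero hRl hb]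

theorem exists_kerCoords_eq [DecidableEq ιc] [DecidableEq ιl] (hEc : Ec.det ≠ 0)
    (hRl : Rl.det ≠ 0) :
    ∀ y ∈ LinearMap.ker (fromCols Bc Bj).mulVecLin, ∀ z ∈ LinearMap.ker (fromCols Du Dl).mulVecLin,
      ∃ x ∈ LinearMap.ker (matrixA Bc Br Bg Bj Dr Du Dl Dg R G Ec Rl).mulVecLin,
        kerCoords Ec Rl x = (y, z) := by
  simp only [Sum.forall_elim]
  intro c j hy u l hz
  obtain ⟨a, rfl⟩ := mulVec_surjective_iff_isUnit.2 ((isUnit_iff_isUnit_det Ec).2 hEc.isUnit) c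
  obtain ⟨b, rfl⟩ := mulVec_surjective_iff_isUnit.2 ((isUnit_iff_isUnit_det Rl).2 hRl.isUnit) l
  exact ⟨Sum.elim a (Sum.elim b (Sum.elim 0 (Sum.elim u (Sum.elim 0 j)))),
    (sumElim_mem_ker_matrixA_iff hBD hR hG).2 ⟨rfl, rfl, hy, hz⟩, rfl⟩

variable (Bc Br Bg Bj Dr Du Dl Dg R G Ec Rl) in
noncomputable def kerMatrixAEquiv [DecidableEq ιc] [DecidableEq ιl] (hEc : Ec.det ≠ 0)
    (hRl : Rl.det ≠ 0) :
    LinearMap.ker (matrixA Bc Br Bg Bj Dr Du Dl Dg R G Ec Rl).mulVecLin ≃ₗ[ℝ]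
      LinearMap.ker (fromCols Bc Bj).mulVecLin × LinearMap.ker (fromCols Du Dl).mulVecLin :=
  LinearEquiv.ofBijective
    ((LinearMap.codRestrict _ (LinearMap.fst ℝ _ _ ∘ₗ kerCoords Ec Rl ∘ₗ Submodule.subtype _)
        fun x ↦ (kerCoords_mem_prod hBD hR hG x x.2).1).prod
      (LinearMap.codRestrict _ (LinearMap.snd ℝ _ _ ∘ₗ kerCoords Ec Rl ∘ₗ Submodule.subtype _)
        fun x ↦ (kerCoords_mem_prod hBD hR hG x x.2).2))
    ⟨(injective_iff_map_eq_zero _).2 fun x hx ↦ Subtype.ext <|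
        eq_zero_of_kerCoords_eq_zero hBD hR hG hEc hRl x x.2 <|
          congrArg (fun p ↦ ((p.1 : ιc ⊕ ιj → ℝ), (p.2 : ιu ⊕ ιl → ℝ))) hx,
      fun ⟨⟨_, hy⟩, ⟨_, hz⟩⟩ ↦
        let ⟨x, hx, hxyz⟩ := exists_kerCoords_eq hBD hR hG hEc hRl _ hy _ hz
        ⟨⟨x, hx⟩, Prod.ext (Subtype.ext (congrArg Prod.fst hxyz))
          (Subtype.ext (congrArg Prod.snd hxyz))⟩⟩

end Circuit

theorem kernel_dim_of_A_general {p t nm nc nr nu nw nl ng nj : ℕ}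
    (Bm : Matrix (Fin p) (Fin nm) ℝ) (Bc : Matrix (Fin p) (Fin nc) ℝ)
    (Br : Matrix (Fin p) (Fin nr) ℝ) (Bu : Matrix (Fin p) (Fin nu) ℝ)
    (Bw : Matrix (Fin p) (Fin nw) ℝ) (Bl : Matrix (Fin p) (Fin nl) ℝ)
    (Bg : Matrix (Fin p) (Fin ng) ℝ) (Bj : Matrix (Fin p) (Fin nj) ℝ)
    (Dm : Matrix (Fin t) (Fin nm) ℝ) (Dc : Matrix (Fin t) (Fin nc) ℝ)
    (Dr : Matrix (Fin t) (Fin nr) ℝ) (Du : Matrix (Fin t) (Fin nu) ℝ)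
    (Dw : Matrix (Fin t) (Fin nw) ℝ) (Dl : Matrix (Fin t) (Fin nl) ℝ)
    (Dg : Matrix (Fin t) (Fin ng) ℝ) (Dj : Matrix (Fin t) (Fin nj) ℝ)
    (R : Matrix (Fin nr) (Fin nr) ℝ) (G : Matrix (Fin ng) (Fin ng) ℝ)
    (Ec : Matrix (Fin nc) (Fin nc) ℝ) (Rl : Matrix (Fin nl) (Fin nl) ℝ)
    (hkerB : LinearMap.ker (Matrix.fromCols Bm (Matrix.fromCols Bc (Matrix.fromCols Br
      (Matrix.fromCols Bu (Matrix.fromCols Bw (Matrix.fromCols Bl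
        (Matrix.fromCols Bg Bj))))))).mulVecLin
        = LinearMap.range ((Matrix.fromCols Dm (Matrix.fromCols Dc (Matrix.fromCols Dr
      (Matrix.fromCols Du (Matrix.fromCols Dw (Matrix.fromCols Dl
        (Matrix.fromCols Dg Dj)))))))ᵀ).mulVecLin)
    (hR : ∀ u : Fin nr → ℝ, u ≠ 0 → 0 < u ⬝ᵥ R.mulVec u)
    (hG : ∀ u : Fin ng → ℝ, u ≠ 0 → 0 < u ⬝ᵥ G.mulVec u)
    (hEc : Ec.det ≠ 0) (hRl : Rl.det ≠ 0)
    :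
    Module.finrank ℝ ↥(LinearMap.ker (Matrix.fromRows
      (Matrix.fromCols (Bc * Ec) (Matrix.fromCols (0 : Matrix (Fin p) (Fin nl) ℝ)
        (Matrix.fromCols (Br * R) (Matrix.fromCols (0 : Matrix (Fin p) (Fin nu) ℝ)
          (Matrix.fromCols Bg Bj)))))
      (Matrix.fromCols (0 : Matrix (Fin t) (Fin nc) ℝ)
        (Matrix.fromCols (Dl * Rl) (Matrix.fromCols Dr
          (Matrix.fromCols Du (Matrix.fromCols (Dg * G)
            (0 : Matrix (Fin t) (Fin nj) ℝ))))))).mulVecLin)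
      = Module.finrank ℝ ↥(LinearMap.ker (Matrix.fromCols Bc Bj).mulVecLin)
        + Module.finrank ℝ ↥(LinearMap.ker (Matrix.fromCols Du Dl).mulVecLin) :=
  (kerMatrixAEquiv Bc Br Bg Bj Dr Du Dl Dg R G Ec Rl hkerB.le hR hG hEc hRl).finrank_eq.trans
    Module.finrank_prod

/-- Kernel-dimension count in Theorem 3.3: the dimension of the kernel of
A = [[B_c E_c, 0, B_r R, 0, B_g, B_j], [0, D_l 𝓡_l, D_r, D_u, D_g G, 0]] equals
dim ker (B_c B_j) + dim ker (D_u D_l), i.e. the number of independent IC-cutsets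
plus the number of independent VL-loops. -/
theorem kernel_dim_of_A {p t nm nc nr nu nw nl ng nj : ℕ}
    (Bm : Matrix (Fin p) (Fin nm) ℝ) (Bc : Matrix (Fin p) (Fin nc) ℝ)
    (Br : Matrix (Fin p) (Fin nr) ℝ) (Bu : Matrix (Fin p) (Fin nu) ℝ)
    (Bw : Matrix (Fin p) (Fin nw) ℝ) (Bl : Matrix (Fin p) (Fin nl) ℝ)
    (Bg : Matrix (Fin p) (Fin ng) ℝ) (Bj : Matrix (Fin p) (Fin nj) ℝ)
    (Dm : Matrix (Fin t) (Fin nm) ℝ) (Dc : Matrix (Fin t) (Fin nc) ℝ)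
    (Dr : Matrix (Fin t) (Fin nr) ℝ) (Du : Matrix (Fin t) (Fin nu) ℝ)
    (Dw : Matrix (Fin t) (Fin nw) ℝ) (Dl : Matrix (Fin t) (Fin nl) ℝ)
    (Dg : Matrix (Fin t) (Fin ng) ℝ) (Dj : Matrix (Fin t) (Fin nj) ℝ)
    (R : Matrix (Fin nr) (Fin nr) ℝ) (G : Matrix (Fin ng) (Fin ng) ℝ)
    (Ec : Matrix (Fin nc) (Fin nc) ℝ) (Rl : Matrix (Fin nl) (Fin nl) ℝ)
    (hBD : (Matrix.fromCols Bm (Matrix.fromCols Bc (Matrix.fromCols Br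
      (Matrix.fromCols Bu (Matrix.fromCols Bw (Matrix.fromCols Bl
        (Matrix.fromCols Bg Bj))))))) * (Matrix.fromCols Dm (Matrix.fromCols Dc (Matrix.fromCols Dr
      (Matrix.fromCols Du (Matrix.fromCols Dw (Matrix.fromCols Dl
        (Matrix.fromCols Dg Dj)))))))ᵀ = 0)
    (hkerB : LinearMap.ker (Matrix.fromCols Bm (Matrix.fromCols Bc (Matrix.fromCols Br
      (Matrix.fromCols Bu (Matrix.fromCols Bw (Matrix.fromCols Bl
        (Matrix.fromCols Bg Bj))))))).mulVecLin
        = LinearMap.range ((Matrix.fromCols Dm (Matrix.fromCols Dc (Matrix.fromCols Dr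
      (Matrix.fromCols Du (Matrix.fromCols Dw (Matrix.fromCols Dl
        (Matrix.fromCols Dg Dj)))))))ᵀ).mulVecLin)
    (hkerD : LinearMap.ker (Matrix.fromCols Dm (Matrix.fromCols Dc (Matrix.fromCols Dr
      (Matrix.fromCols Du (Matrix.fromCols Dw (Matrix.fromCols Dl
        (Matrix.fromCols Dg Dj))))))).mulVecLin
        = LinearMap.range ((Matrix.fromCols Bm (Matrix.fromCols Bc (Matrix.fromCols Br
      (Matrix.fromCols Bu (Matrix.fromCols Bw (Matrix.fromCols Bl
        (Matrix.fromCols Bg Bj)))))))ᵀ).mulVecLin)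
    (hR : ∀ u : Fin nr → ℝ, u ≠ 0 → 0 < u ⬝ᵥ R.mulVec u)
    (hG : ∀ u : Fin ng → ℝ, u ≠ 0 → 0 < u ⬝ᵥ G.mulVec u)
    (hEc : Ec.det ≠ 0) (hRl : Rl.det ≠ 0)
    :
    Module.finrank ℝ ↥(LinearMap.ker (Matrix.fromRows
      (Matrix.fromCols (Bc * Ec) (Matrix.fromCols (0 : Matrix (Fin p) (Fin nl) ℝ)
        (Matrix.fromCols (Br * R) (Matrix.fromCols (0 : Matrix (Fin p) (Fin nu) ℝ)
          (Matrix.fromCols Bg Bj)))))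
      (Matrix.fromCols (0 : Matrix (Fin t) (Fin nc) ℝ)
        (Matrix.fromCols (Dl * Rl) (Matrix.fromCols Dr
          (Matrix.fromCols Du (Matrix.fromCols (Dg * G)
            (0 : Matrix (Fin t) (Fin nj) ℝ))))))).mulVecLin)
      = Module.finrank ℝ ↥(LinearMap.ker (Matrix.fromCols Bc Bj).mulVecLin)
        + Module.finrank ℝ ↥(LinearMap.ker (Matrix.fromCols Du Dl).mulVecLin) :=
  kernel_dim_of_A_general Bm Bc Br Bu Bw Bl Bg Bj Dm Dc Dr Du Dw Dl Dg Dj R G Ec Rl hkerB hR hG hEc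
    hRl
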